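/- Every nilpotent superconnected quandle is latin. -/

import Mathlib

/-!
Let `Z` be the centre of `Dis Q`. Superconnectedness makes `Dis Q` transitive, so `Z` acts
semiregularly, and it makes `LM` injective. The `Z`-orbits form a congruence whose quotient is again
a superconnected quandle, and `Dis Q` maps onto its displacement group with `Z` in the kernel, so
the nilpotency class drops and by induction the quotient is latin. This lifts to `Q` since
`LM (u x) = ⁅u, LM x⁆ * LM x` with `⁅u, LM x⁆ ∈ Z` for `u ∈ Z`: if `x * c = y * c` with `y = u x`
then `⁅u, LM x⁆` fixes `x * c`, so is trivial and `LM x = LM y`; for surjectivity one needs every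
`w ∈ Z` to be some `⁅u, LM a⁆`, and this follows from the connectedness of the subquandle `Z a`,
an affine quandle over `Z` on which `u ↦ ⁅u, LM a⁆` plays the role of `1 - φ`.
-/

/-- A left quasigroup: left multiplications are bijective. -/
class LQgrp (Q : Type*) where
  mul : Q → Q → Q
  ld : Q → Q → Q
  ld_mul : ∀ x y, ld x (mul x y) = y
  mul_ld : ∀ x y, mul x (ld x y) = y

namespace LQgrp

variable {Q : Type*} [LQgrp Q]

/-- Left multiplication as a permutation. -/
def LM (a : Q) : Equiv.Perm Q := ⟨mul a, ld a, ld_mul a, mul_ld a⟩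

/-- The left multiplication group. -/
def LMlt (Q : Type*) [LQgrp Q] : Subgroup (Equiv.Perm Q) :=
  Subgroup.closure (Set.range (LM : Q → Equiv.Perm Q))

/-- Subalgebras: subsets closed under both operations. -/
def IsSubalg (S : Set Q) : Prop :=
  (∀ a ∈ S, ∀ b ∈ S, mul a b ∈ S) ∧ (∀ a ∈ S, ∀ b ∈ S, ld a b ∈ S)

/-- The subalgebra generated by a set. -/
def Sg (X : Set Q) : Set Q := ⋂₀ {S | IsSubalg S ∧ X ⊆ S}

/-- A subset is connected if the group generated by its left translations
acts transitively on it. -/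
def ConnectedSet (S : Set Q) : Prop :=
  ∀ a ∈ S, ∀ b ∈ S, ∃ h ∈ Subgroup.closure ((LM : Q → Equiv.Perm Q) '' S), h a = b

/-- `Q` is connected if `LMlt Q` acts transitively. -/
def Connected (Q : Type*) [LQgrp Q] : Prop := ∀ a b : Q, ∃ h ∈ LMlt Q, h a = b

/-- `Q` is superconnected if every subalgebra is connected. -/
def Superconnected (Q : Type*) [LQgrp Q] : Prop :=
  ∀ S : Set Q, IsSubalg S → ConnectedSet S

/-- Faithfulness of a subalgebra: distinct elements have distinct left translations. -/
def FaithfulOn (S : Set Q) : Prop :=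
  ∀ a ∈ S, ∀ b ∈ S, (∀ c ∈ S, mul a c = mul b c) → a = b

/-- `Q` is superfaithful if every subalgebra is faithful. -/
def Superfaithful (Q : Type*) [LQgrp Q] : Prop :=
  ∀ S : Set Q, IsSubalg S → FaithfulOn S

/-- Latin: right multiplications are bijective. -/
def Latin (Q : Type*) [LQgrp Q] : Prop := ∀ a : Q, Function.Bijective (fun b => mul b a)

/-- The displacement group of a rack/quandle. -/
def Dis (Q : Type*) [LQgrp Q] : Subgroup (Equiv.Perm Q) :=
  Subgroup.closure {g : Equiv.Perm Q | ∃ a b : Q, g = LM a * (LM b)⁻¹}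

end LQgrp

/-- A quandle: idempotent, left distributive left quasigroup. -/
class Qdl (Q : Type*) extends LQgrp Q where
  idem : ∀ x : Q, mul x x = x
  ldist : ∀ x y z : Q, mul x (mul y z) = mul (mul x y) (mul x z)

/-- An involutory quandle. -/
class InvQdl (Q : Type*) extends Qdl Q where
  invol : ∀ x y : Q, mul x (mul x y) = y

open LQgrp

open Equiv Subgroup Set Function
open scoped commutatorElement

section Perm

variable {α β : Type*}

theorem Equiv.Perm.apply_eq_of_mem_closure {S : Set (Perm α)} {x : α} (hS : ∀ g ∈ S, g x = x)
    {g : Perm α} (hg : g ∈ closure S) : g x = x :=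
  (closure_le (MulAction.stabilizer (Perm α) x)).mpr hS hg

theorem Equiv.Perm.mapsTo_of_mem_closure {S : Set (Perm α)} {O : Set α}
    (hS : ∀ g ∈ S, MapsTo g O O ∧ MapsTo ⇑g⁻¹ O O) {g : Perm α} (hg : g ∈ closure S) :
    MapsTo g O O := by
  suffices MapsTo g O O ∧ MapsTo ⇑g⁻¹ O O from this.1
  induction hg using closure_induction with
  | mem g hg => exact hS g hg
  | one => exact ⟨mapsTo_id O, mapsTo_id O⟩
  | mul g h _ _ hg hh => exact ⟨hg.1.comp hh.1, by rw [mul_inv_rev]; exact hh.2.comp hg.2⟩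
  | inv g _ hg => exact ⟨hg.2, by rw [inv_inv]; exact hg.1⟩

theorem Equiv.Perm.exists_mem_closure_semiconj {f : α → β} {S : Set (Perm α)}
    {T : Set (Perm β)} (hST : ∀ s ∈ S, ∃ t ∈ T, ∀ a, t (f a) = f (s a)) {g : Perm α}
    (hg : g ∈ closure S) :
    ∃ g' ∈ closure T, ∀ a, g' (f a) = f (g a) := by
  induction hg using closure_induction with
  | mem s hs =>
    obtain ⟨t, ht, hts⟩ := hST s hs
    exact ⟨t, subset_closure ht, hts⟩
  | one => exact ⟨1, one_mem _, fun _ => rfl⟩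
  | mul g h _ _ hg hh =>
    obtain ⟨g', hg', hg'f⟩ := hg
    obtain ⟨h', hh', hh'f⟩ := hh
    exact ⟨g' * h', mul_mem hg' hh', fun a => by simp only [Perm.mul_apply, hh'f, hg'f]⟩
  | inv g _ hg =>
    obtain ⟨g', hg', hg'f⟩ := hg
    refine ⟨g'⁻¹, inv_mem hg', fun a => ?_⟩
    rw [Perm.inv_eq_iff_eq, hg'f]
    simp

end Perm

section GroupLemmas

variable {G H : Type*} [Group G] [Group H]

theorem Subgroup.lowerCentralSeries_le_center_of_succ_eq_bot {n : ℕ}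
    (h : (⊤ : Subgroup G).lowerCentralSeries (n + 1) = ⊥) :
    (⊤ : Subgroup G).lowerCentralSeries n ≤ center G := by
  intro x hx
  rw [mem_center_iff]
  intro g
  have : ⁅x, g⁆ ∈ (⊤ : Subgroup G).lowerCentralSeries (n + 1) :=
    commutator_mem_commutator hx (mem_top g)
  rw [h, mem_bot, commutatorElement_eq_one_iff_mul_comm] at this
  exact this.symm

theorem Subgroup.lowerCentralSeries_range_eq_bot {S : Subgroup G} (f : S →* H)
    (hf : center S ≤ f.ker) {n : ℕ} (h : S.lowerCentralSeries (n + 1) = ⊥) :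
    f.range.lowerCentralSeries n = ⊥ := by
  replace h : (⊤ : Subgroup S).lowerCentralSeries (n + 1) = ⊥ := by
    rwa [← map_subtype_inj, map_bot, top_subtype_lowerCentralSeries]
  rw [MonoidHom.range_eq_map, ← map_lowerCentralSeries, map_eq_bot_iff]
  exact (lowerCentralSeries_le_center_of_succ_eq_bot h).trans hf

theorem conj_mul_commutatorElement {A u v : G} (hu : Commute v u)
    (hAu : Commute v (A * u * A⁻¹)) :
    v * A * v⁻¹ * ⁅u, A⁆ = ⁅v * (A * u * A⁻¹), A⁆ * A :=
  calc v * A * v⁻¹ * ⁅u, A⁆ = v * A * (v⁻¹ * u) * (A * u * A⁻¹)⁻¹ := by group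
    _ = v * A * u * (v⁻¹ * (A * u * A⁻¹)⁻¹) := by rw [hu.inv_left.eq]; group
    _ = v * A * u * ((A * u * A⁻¹)⁻¹ * v⁻¹) := by rw [hAu.inv_inv.eq]
    _ = ⁅v * (A * u * A⁻¹), A⁆ * A := by group

theorem conj_inv_mul_commutatorElement {A u v : G} (hu : Commute v u)
    (ht : Commute v (A⁻¹ * (v⁻¹ * u) * A)) :
    v * A⁻¹ * v⁻¹ * ⁅u, A⁆ = ⁅A⁻¹ * (v⁻¹ * u) * A, A⁆ * A⁻¹ :=
  calc v * A⁻¹ * v⁻¹ * ⁅u, A⁆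
      = v * (A⁻¹ * (v⁻¹ * u) * A) * u⁻¹ * A⁻¹ := by group
    _ = (A⁻¹ * (v⁻¹ * u) * A) * (v * u⁻¹) * A⁻¹ := by rw [ht.eq]; group
    _ = (A⁻¹ * (v⁻¹ * u) * A) * (u⁻¹ * v) * A⁻¹ := by rw [hu.inv_right.eq]
    _ = ⁅A⁻¹ * (v⁻¹ * u) * A, A⁆ * A⁻¹ := by group

end GroupLemmas

namespace LQgrp

section Quandle

variable {Q : Type*} [Qdl Q]

theorem LM_apply_self (a : Q) : LM a a = a := Qdl.idem a

theorem LM_inv_apply_self (a : Q) : (LM a)⁻¹ a = a := by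
  rw [Perm.inv_eq_iff_eq, LM_apply_self]

theorem LM_mul (a b : Q) : LM (mul a b) = LM a * LM b * (LM a)⁻¹ := by
  ext z
  change mul (mul a b) z = mul a (mul b (ld a z))
  rw [Qdl.ldist a b (ld a z), mul_ld]

theorem LM_ld (a b : Q) : LM (ld a b) = (LM a)⁻¹ * LM b * LM a := by
  have h := LM_mul a (ld a b)
  rw [mul_ld] at h
  rw [h]
  group

theorem LM_mem_LMlt (a : Q) : LM a ∈ LMlt Q := subset_closure ⟨a, rfl⟩

theorem LM_apply_of_mem_LMlt {g : Perm Q} (hg : g ∈ LMlt Q) (b : Q) :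
    LM (g b) = g * LM b * g⁻¹ := by
  induction hg using closure_induction generalizing b with
  | mem g hg =>
    obtain ⟨a, rfl⟩ := hg
    exact LM_mul a b
  | one => simp
  | mul g h _ _ hg hh => rw [Perm.mul_apply, hg, hh]; group
  | inv g _ hg =>
    have h := hg (g⁻¹ b)
    rw [show g (g⁻¹ b) = b from g.apply_symm_apply b] at h
    rw [h]
    group

theorem mul_LM_inv_mem_Dis (a b : Q) : LM a * (LM b)⁻¹ ∈ Dis Q :=
  subset_closure ⟨a, b, rfl⟩

theorem Dis_le_LMlt : Dis Q ≤ LMlt Q := by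
  rw [Dis, closure_le]
  rintro _ ⟨a, b, rfl⟩
  exact mul_mem (LM_mem_LMlt a) (inv_mem (LM_mem_LMlt b))

theorem conj_mem_Dis {g d : Perm Q} (hg : g ∈ LMlt Q) (hd : d ∈ Dis Q) :
    g * d * g⁻¹ ∈ Dis Q := by
  induction hd using closure_induction with
  | mem d hd =>
    obtain ⟨a, b, rfl⟩ := hd
    have : g * (LM a * (LM b)⁻¹) * g⁻¹ = (g * LM a * g⁻¹) * (g * LM b * g⁻¹)⁻¹ := by
      group
    rw [this, ← LM_apply_of_mem_LMlt hg, ← LM_apply_of_mem_LMlt hg]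
    exact mul_LM_inv_mem_Dis _ _
  | one => simp [one_mem]
  | mul d e _ _ hd he =>
    have : g * (d * e) * g⁻¹ = (g * d * g⁻¹) * (g * e * g⁻¹) := by group
    exact this ▸ mul_mem hd he
  | inv d _ hd =>
    have : g * d⁻¹ * g⁻¹ = (g * d * g⁻¹)⁻¹ := by group
    exact this ▸ inv_mem hd

/-- Since `LM b = (LM b * (LM a)⁻¹) * LM a` and `LM a` fixes `a`, every orbit of `LMlt Q` is an
orbit of `Dis Q`. -/
theorem exists_mem_Dis_apply_eq {g : Perm Q} (hg : g ∈ LMlt Q) (a : Q) :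
    ∃ d ∈ Dis Q, d a = g a := by
  induction hg using closure_induction generalizing a with
  | mem g hg =>
    obtain ⟨b, rfl⟩ := hg
    refine ⟨LM b * (LM a)⁻¹, mul_LM_inv_mem_Dis b a, ?_⟩
    rw [Perm.mul_apply, LM_inv_apply_self]
  | one => exact ⟨1, one_mem _, rfl⟩
  | mul g h _ _ hg hh =>
    obtain ⟨e, he, hea⟩ := hh a
    obtain ⟨d, hd, hdea⟩ := hg (e a)
    exact ⟨d * e, mul_mem hd he, by rw [Perm.mul_apply, Perm.mul_apply, hdea, hea]⟩
  | inv g _ hg =>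
    obtain ⟨d, hd, hda⟩ := hg (g⁻¹ a)
    refine ⟨d⁻¹, inv_mem hd, ?_⟩
    rw [Perm.inv_eq_iff_eq, hda]
    exact (g.apply_symm_apply a).symm

theorem Superconnected.exists_mem_Dis_apply_eq (hsc : Superconnected Q) (a b : Q) :
    ∃ d ∈ Dis Q, d a = b := by
  obtain ⟨h, hh, rfl⟩ :=
    hsc univ ⟨fun _ _ _ _ => trivial, fun _ _ _ _ => trivial⟩ a trivial b trivial
  rw [image_univ] at hh
  exact LQgrp.exists_mem_Dis_apply_eq hh a

/-- A superconnected quandle is superfaithful: the elements `s` with `s * x = x` form a subquandle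
containing `x` and any `y` with `LM y = LM x`, and its left translations all fix `x`. -/
theorem Superconnected.LM_injective (hsc : Superconnected Q) : Injective (LM : Q → Perm Q) := by
  intro x y hxy
  let T : Set Q := {s | LM s x = x}
  have hT : IsSubalg T := by
    constructor
    · intro s (hs : LM s x = x) t (ht : LM t x = x)
      change LM (mul s t) x = x
      rw [LM_mul, Perm.mul_apply, Perm.mul_apply, Perm.inv_eq_iff_eq.mpr hs.symm, ht, hs]
    · intro s (hs : LM s x = x) t (ht : LM t x = x)
      change LM (ld s t) x = x
      rw [LM_ld, Perm.mul_apply, Perm.mul_apply, hs, ht, Perm.inv_eq_iff_eq.mpr hs.symm]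
  have hxT : x ∈ T := LM_apply_self x
  have hyT : y ∈ T := by
    change LM y x = x
    rw [← hxy, LM_apply_self]
  obtain ⟨h, hh, rfl⟩ := hsc T hT x hxT y hyT
  exact (Perm.apply_eq_of_mem_closure (by rintro _ ⟨s, hs, rfl⟩; exact hs) hh).symm

theorem LM_apply_eq_commutatorElement_mul {g : Perm Q} (hg : g ∈ LMlt Q) (b : Q) :
    LM (g b) = ⁅g, LM b⁆ * LM b := by
  rw [LM_apply_of_mem_LMlt hg, commutatorElement_def]
  group

end Quandle

def disCenter (Q : Type*) [LQgrp Q] : Subgroup (Perm Q) := Dis Q ⊓ centralizer (Dis Q)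

section DisCenter

variable {Q : Type*} [Qdl Q] {u v z : Perm Q}

theorem disCenter_le_Dis : disCenter Q ≤ Dis Q := inf_le_left

theorem commute_of_mem_Dis_of_mem_disCenter {d : Perm Q} (hd : d ∈ Dis Q)
    (hz : z ∈ disCenter Q) : Commute d z :=
  Subgroup.mem_centralizer_iff.mp (mem_inf.mp hz).2 d hd

theorem disCenter_le_LMlt : disCenter Q ≤ LMlt Q := disCenter_le_Dis.trans Dis_le_LMlt

theorem commute_of_mem_disCenter (hu : u ∈ disCenter Q) (hv : v ∈ disCenter Q) : Commute u v :=
  commute_of_mem_Dis_of_mem_disCenter (disCenter_le_Dis hu) hv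

theorem conj_mem_disCenter {g : Perm Q} (hg : g ∈ LMlt Q) (hz : z ∈ disCenter Q) :
    g * z * g⁻¹ ∈ disCenter Q := by
  refine mem_inf.mpr ⟨conj_mem_Dis hg (disCenter_le_Dis hz),
    Subgroup.mem_centralizer_iff.mpr fun d hd => ?_⟩
  have hd' : g⁻¹ * d * g ∈ Dis Q := by simpa using conj_mem_Dis (inv_mem hg) hd
  have hcomm := (Commute.conj_iff g).mpr (commute_of_mem_Dis_of_mem_disCenter hd' hz)
  rw [show g * (g⁻¹ * d * g) * g⁻¹ = d by group] at hcomm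
  exact hcomm.eq

theorem commutatorElement_mem_disCenter {g : Perm Q} (hu : u ∈ disCenter Q) (hg : g ∈ LMlt Q) :
    ⁅u, g⁆ ∈ disCenter Q := by
  rw [commutatorElement_def, mul_assoc, mul_assoc, ← mul_assoc g]
  exact mul_mem hu (conj_mem_disCenter hg (inv_mem hu))

/-- Semiregularity: `Dis Q` is transitive and commutes with its centre. -/
theorem Superconnected.eq_of_mem_disCenter (hsc : Superconnected Q) (hu : u ∈ disCenter Q)
    (hv : v ∈ disCenter Q) {a : Q} (h : u a = v a) : u = v := by
  ext b
  obtain ⟨d, hd, rfl⟩ := hsc.exists_mem_Dis_apply_eq a b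
  rw [← Perm.mul_apply, ← (commute_of_mem_Dis_of_mem_disCenter hd hu).eq, Perm.mul_apply, h,
    ← Perm.mul_apply, (commute_of_mem_Dis_of_mem_disCenter hd hv).eq, Perm.mul_apply]

theorem orbitRel_disCenter_iff {a b : Q} :
    MulAction.orbitRel (disCenter Q) Q a b ↔ ∃ z ∈ disCenter Q, a = z b := by
  rw [MulAction.orbitRel_apply, MulAction.mem_orbit_iff]
  constructor
  · rintro ⟨z, rfl⟩
    exact ⟨z, z.2, rfl⟩
  · rintro ⟨z, hz, rfl⟩
    exact ⟨⟨z, hz⟩, rfl⟩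

theorem exists_mem_disCenter_conj_apply {σ : Perm Q} (hσ : σ ∈ LMlt Q) (hu : u ∈ disCenter Q)
    (hv : v ∈ disCenter Q) (b : Q) :
    ∃ w ∈ disCenter Q, (u * σ * u⁻¹) (v b) = w (σ b) := by
  refine ⟨u * (σ * (u⁻¹ * v) * σ⁻¹),
    mul_mem hu (conj_mem_disCenter hσ (mul_mem (inv_mem hu) hv)), ?_⟩
  rw [← Perm.mul_apply, ← Perm.mul_apply]
  congr 1
  group

theorem orbitRel_mul {a a' b b' : Q} (ha : MulAction.orbitRel (disCenter Q) Q a a')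
    (hb : MulAction.orbitRel (disCenter Q) Q b b') :
    MulAction.orbitRel (disCenter Q) Q (mul a b) (mul a' b') := by
  obtain ⟨u, hu, rfl⟩ := orbitRel_disCenter_iff.mp ha
  obtain ⟨v, hv, rfl⟩ := orbitRel_disCenter_iff.mp hb
  obtain ⟨w, hw, hwab⟩ := exists_mem_disCenter_conj_apply (LM_mem_LMlt a') hu hv b'
  refine orbitRel_disCenter_iff.mpr ⟨w, hw, ?_⟩
  change LM (u a') (v b') = w (LM a' b')
  rw [LM_apply_of_mem_LMlt (disCenter_le_LMlt hu), hwab]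

theorem orbitRel_ld {a a' b b' : Q} (ha : MulAction.orbitRel (disCenter Q) Q a a')
    (hb : MulAction.orbitRel (disCenter Q) Q b b') :
    MulAction.orbitRel (disCenter Q) Q (ld a b) (ld a' b') := by
  obtain ⟨u, hu, rfl⟩ := orbitRel_disCenter_iff.mp ha
  obtain ⟨v, hv, rfl⟩ := orbitRel_disCenter_iff.mp hb
  obtain ⟨w, hw, hwab⟩ := exists_mem_disCenter_conj_apply (inv_mem (LM_mem_LMlt a')) hu hv b'
  refine orbitRel_disCenter_iff.mpr ⟨w, hw, ?_⟩
  change (LM (u a'))⁻¹ (v b') = w ((LM a')⁻¹ b')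
  rw [LM_apply_of_mem_LMlt (disCenter_le_LMlt hu), ← hwab,
    show (u * LM a' * u⁻¹)⁻¹ = u * (LM a')⁻¹ * u⁻¹ by group]

theorem orbitRel_apply_iff {g : Perm Q} (hg : g ∈ LMlt Q) {a b : Q} :
    MulAction.orbitRel (disCenter Q) Q (g a) (g b) ↔ MulAction.orbitRel (disCenter Q) Q a b := by
  suffices h : ∀ {g : Perm Q}, g ∈ LMlt Q → ∀ {a b : Q},
      MulAction.orbitRel (disCenter Q) Q a b → MulAction.orbitRel (disCenter Q) Q (g a) (g b) from
    ⟨fun hab => by simpa using h (inv_mem hg) hab, h hg⟩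
  intro g hg a b hab
  obtain ⟨z, hz, rfl⟩ := orbitRel_disCenter_iff.mp hab
  exact orbitRel_disCenter_iff.mpr ⟨g * z * g⁻¹, conj_mem_disCenter hg hz, by simp⟩

end DisCenter

def CenterQuotient (Q : Type*) [Qdl Q] : Type _ := MulAction.orbitRel.Quotient (disCenter Q) Q

namespace CenterQuotient

variable {Q : Type*} [Qdl Q]

def proj : Q → CenterQuotient Q := Quotient.mk _

theorem proj_surjective : Surjective (proj : Q → CenterQuotient Q) := Quotient.mk_surjective

theorem exists_mem_disCenter_of_proj_eq {a b : Q} (h : proj a = proj b) :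
    ∃ z ∈ disCenter Q, a = z b :=
  orbitRel_disCenter_iff.mp (Quotient.exact h)

theorem proj_apply_of_mem_disCenter {z : Perm Q} (hz : z ∈ disCenter Q) (a : Q) :
    proj (z a) = proj a :=
  Quotient.sound (orbitRel_disCenter_iff.mpr ⟨z, hz, rfl⟩)

instance : Qdl (CenterQuotient Q) where
  mul := Quotient.map₂ mul fun _ _ ha _ _ hb => orbitRel_mul ha hb
  ld := Quotient.map₂ ld fun _ _ ha _ _ hb => orbitRel_ld ha hb
  ld_mul x y := by
    induction x, y using Quotient.inductionOn₂
    exact congrArg proj (ld_mul _ _)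
  mul_ld x y := by
    induction x, y using Quotient.inductionOn₂
    exact congrArg proj (mul_ld _ _)
  idem x := by
    induction x using Quotient.inductionOn
    exact congrArg proj (Qdl.idem _)
  ldist x y z := by
    induction x, y, z using Quotient.inductionOn₃
    exact congrArg proj (Qdl.ldist _ _ _)

theorem proj_mul (a b : Q) : mul (proj a) (proj b) = proj (mul a b) := rfl

theorem LM_proj (a b : Q) : LM (proj a) (proj b) = proj (LM a b) := rfl

theorem LM_inv_proj (a b : Q) : (LM (proj a))⁻¹ (proj b) = proj ((LM a)⁻¹ b) := rfl

theorem superconnected (hsc : Superconnected Q) : Superconnected (CenterQuotient Q) := by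
  intro S hS x hx y hy
  obtain ⟨a, rfl⟩ := proj_surjective x
  obtain ⟨b, rfl⟩ := proj_surjective y
  have hS' : IsSubalg (proj ⁻¹' S) :=
    ⟨fun a ha b hb => hS.1 _ ha _ hb, fun a ha b hb => hS.2 _ ha _ hb⟩
  obtain ⟨h, hh, rfl⟩ := hsc _ hS' a hx b hy
  have hST : ∀ g ∈ LM '' (proj ⁻¹' S), ∃ t ∈ LM '' S, ∀ c, t (proj c) = proj (g c) := by
    rintro _ ⟨s, hs, rfl⟩
    exact ⟨LM (proj s), mem_image_of_mem LM hs, LM_proj s⟩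
  obtain ⟨h', hh', hh'proj⟩ := Perm.exists_mem_closure_semiconj hST hh
  exact ⟨h', hh', hh'proj a⟩

def disHom : Dis Q →* Perm (CenterQuotient Q) where
  toFun g := Quotient.congr g.1 fun _ _ => (orbitRel_apply_iff (Dis_le_LMlt g.2)).symm
  map_one' := by ext ⟨a⟩; rfl
  map_mul' _ _ := by ext ⟨a⟩; rfl

theorem range_disHom :
    (disHom : Dis Q →* Perm (CenterQuotient Q)).range = Dis (CenterQuotient Q) := by
  apply le_antisymm
  · rintro _ ⟨g, rfl⟩
    obtain ⟨g', hg', hg'proj⟩ := Perm.exists_mem_closure_semiconj (f := proj)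
      (T := {g | ∃ a b : CenterQuotient Q, g = LM a * (LM b)⁻¹})
      (by rintro _ ⟨a, b, rfl⟩; exact ⟨_, ⟨proj a, proj b, rfl⟩, fun c => rfl⟩) g.2
    suffices disHom g = g' from this ▸ hg'
    ext x
    obtain ⟨a, rfl⟩ := proj_surjective x
    exact (hg'proj a).symm
  · rw [Dis, closure_le]
    rintro _ ⟨x, y, rfl⟩
    obtain ⟨a, rfl⟩ := proj_surjective x
    obtain ⟨b, rfl⟩ := proj_surjective y
    refine ⟨⟨_, mul_LM_inv_mem_Dis a b⟩, ?_⟩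
    ext ⟨c⟩
    rfl

theorem center_le_ker_disHom :
    Subgroup.center (Dis Q) ≤ (disHom : Dis Q →* Perm (CenterQuotient Q)).ker := by
  intro g hg
  have hgZ : g.1 ∈ disCenter Q := mem_inf.mpr ⟨g.2, Subgroup.mem_centralizer_iff.mpr fun d hd =>
    congrArg Subtype.val (mem_center_iff.mp hg ⟨d, hd⟩)⟩
  ext ⟨a⟩
  exact proj_apply_of_mem_disCenter hgZ a

end CenterQuotient

section Latin

open CenterQuotient

variable {Q : Type*} [Qdl Q]

def commutatorOrbit (a : Q) : Set Q := {x | ∃ u ∈ disCenter Q, ⁅u, LM a⁆ a = x}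

theorem mapsTo_LM_commutatorOrbit {a : Q} {v : Perm Q} (hv : v ∈ disCenter Q) :
    MapsTo (LM (v a)) (commutatorOrbit a) (commutatorOrbit a) ∧
      MapsTo ⇑(LM (v a))⁻¹ (commutatorOrbit a) (commutatorOrbit a) := by
  have hA := LM_mem_LMlt a
  have hLM : LM (v a) = v * LM a * v⁻¹ := LM_apply_of_mem_LMlt (disCenter_le_LMlt hv) a
  constructor
  · rintro _ ⟨u, hu, rfl⟩
    have hu' := conj_mem_disCenter hA hu
    refine ⟨_, mul_mem hv hu', ?_⟩
    have := conj_mul_commutatorElement (commute_of_mem_disCenter hv hu)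
      (commute_of_mem_disCenter hv hu')
    rw [hLM, ← Perm.mul_apply, this, Perm.mul_apply, LM_apply_self]
  · rintro _ ⟨u, hu, rfl⟩
    have ht : (LM a)⁻¹ * (v⁻¹ * u) * LM a ∈ disCenter Q := by
      simpa using conj_mem_disCenter (inv_mem hA) (mul_mem (inv_mem hv) hu)
    refine ⟨_, ht, ?_⟩
    have := conj_inv_mul_commutatorElement (commute_of_mem_disCenter hv hu)
      (commute_of_mem_disCenter hv ht)
    have hinv : (LM (v a))⁻¹ = v * (LM a)⁻¹ * v⁻¹ := by rw [hLM]; group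
    rw [hinv, ← Perm.mul_apply, this, Perm.mul_apply, LM_inv_apply_self]

/-- The orbit of `a` under the centre of `Dis Q` is a connected subquandle, and `commutatorOrbit a`
is a subset of it containing `a` and stable under its left translations. -/
theorem Superconnected.exists_eq_commutatorElement (hsc : Superconnected Q) {w : Perm Q}
    (hw : w ∈ disCenter Q) (a : Q) : ∃ u ∈ disCenter Q, w = ⁅u, LM a⁆ := by
  have hB : IsSubalg (proj ⁻¹' {proj a}) := by
    constructor
    · intro b (hb : proj b = proj a) c (hc : proj c = proj a)
      change proj (mul b c) = proj a
      rw [← proj_mul, hb, hc, Qdl.idem]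
    · intro b (hb : proj b = proj a) c (hc : proj c = proj a)
      change proj ((LM b)⁻¹ c) = proj a
      rw [← LM_inv_proj, hb, hc, LM_inv_apply_self]
  obtain ⟨h, hh, hha⟩ := hsc _ hB a rfl (w a) (proj_apply_of_mem_disCenter hw a)
  have hO : MapsTo h (commutatorOrbit a) (commutatorOrbit a) := by
    refine Perm.mapsTo_of_mem_closure ?_ hh
    rintro _ ⟨s, hs, rfl⟩
    obtain ⟨v, hv, rfl⟩ := exists_mem_disCenter_of_proj_eq hs
    exact mapsTo_LM_commutatorOrbit hv
  obtain ⟨u, hu, hua⟩ := hha ▸ hO ⟨1, one_mem _, by simp⟩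
  exact ⟨u, hu,
    hsc.eq_of_mem_disCenter hw (commutatorElement_mem_disCenter hu (LM_mem_LMlt a)) hua.symm⟩

theorem Superconnected.latin_of_latin_centerQuotient (hsc : Superconnected Q)
    (hQ : Latin (CenterQuotient Q)) : Latin Q := by
  intro c
  refine ⟨fun x y (hxy : mul x c = mul y c) => ?_, fun b => ?_⟩
  · obtain ⟨u, hu, rfl⟩ := exists_mem_disCenter_of_proj_eq <|
      (hQ (proj c)).1 (congrArg proj hxy : mul (proj x) (proj c) = mul (proj y) (proj c))
    have hLM := LM_apply_eq_commutatorElement_mul (disCenter_le_LMlt hu) y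
    have hfix : ⁅u, LM y⁆ (mul y c) = (1 : Perm Q) (mul y c) := by
      change ⁅u, LM y⁆ (LM y c) = LM y c
      rw [← Perm.mul_apply, ← hLM]
      exact hxy
    have h1 := hsc.eq_of_mem_disCenter (commutatorElement_mem_disCenter hu (LM_mem_LMlt y))
      (one_mem _) hfix
    exact hsc.LM_injective (by rw [hLM, h1, one_mul])
  · obtain ⟨x, hx⟩ := (hQ (proj c)).2 (proj b)
    obtain ⟨a, rfl⟩ := proj_surjective x
    obtain ⟨w, hw, rfl⟩ := exists_mem_disCenter_of_proj_eq hx.symm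
    obtain ⟨u, hu, rfl⟩ := hsc.exists_eq_commutatorElement hw a
    refine ⟨u a, ?_⟩
    change LM (u a) c = _
    rw [LM_apply_eq_commutatorElement_mul (disCenter_le_LMlt hu), Perm.mul_apply]
    rfl

theorem Superconnected.latin_of_lowerCentralSeries_eq_bot (hsc : Superconnected Q) {n : ℕ}
    (hn : (Dis Q).lowerCentralSeries n = ⊥) : Latin Q := by
  induction n generalizing Q with
  | zero =>
    have : Subsingleton Q := ⟨fun a b => hsc.LM_injective <| mul_inv_eq_one.mp <|
      (mem_bot.mp (hn ▸ mul_LM_inv_mem_Dis a b))⟩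
    exact fun c => ⟨fun _ _ _ => Subsingleton.elim _ _, fun b => ⟨b, Subsingleton.elim _ _⟩⟩
  | succ n ih =>
    refine hsc.latin_of_latin_centerQuotient (ih (CenterQuotient.superconnected hsc) ?_)
    rw [← range_disHom]
    exact lowerCentralSeries_range_eq_bot disHom center_le_ker_disHom hn

end Latin

end LQgrp

/-- every nilpotent superconnected quandle is latin
(nilpotence of a quandle is equivalent to nilpotence of its displacement group). -/
theorem stmt11 {Q : Type*} [Qdl Q] (hsc : Superconnected Q)
    (hnil : Group.IsNilpotent ↥(Dis Q)) : Latin Q := by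
  obtain ⟨n, hn⟩ := (isNilpotent_iff_lowerCentralSeries (Dis Q)).mp hnil
  exact hsc.latin_of_lowerCentralSeries_eq_bot hn
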